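/- Removing from an unbalanced minimal set cover C of an n-set V a set Y with |Y| = |V| − |C| + 1, together with all elements of V covered only by Y, yields a minimal set cover C' of a set with at most n − 1 elements, and |C'| = |C| − 1. -/
import Mathlib


/-- `C` is a set cover of the finite type `V`: the union of its members is all of `V`. -/
def IsSetCover {V : Type*} [Fintype V] (C : Finset (Finset V)) : Prop :=
  ∀ v : V, ∃ A ∈ C, v ∈ A

/-- A set cover is minimal if no member is contained in the union of the remaining members. -/
def IsMinimalCover {V : Type*} [DecidableEq V] (C : Finset (Finset V)) : Prop :=
  ∀ A ∈ C, ¬ A ⊆ (C.erase A).sup id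

/-- A vertex is loyal if it belongs to exactly one member of `C`. -/
def Loyal {V : Type*} (C : Finset (Finset V)) (v : V) : Prop :=
  ∃! A : Finset V, A ∈ C ∧ v ∈ A

/-- Removing from an unbalanced minimal set cover `C` of an `n`-set a member `Y` with
|Y| = |V| − |C| + 1, together with the elements covered only by `Y`, yields a minimal
set cover `C' = C − {Y}` of the remaining ground set, which has at most `n − 1`
elements, and |C'| = |C| − 1. -/
theorem remove_unbalanced_set {V : Type*} [Fintype V] [DecidableEq V]
    (C : Finset (Finset V)) (hC : IsSetCover C) (hm : IsMinimalCover C)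
    (Y : Finset V) (hY : Y ∈ C)
    (hcard : (Y.card : ℤ) = (Fintype.card V : ℤ) - C.card + 1) :
    let V' : Finset V := Finset.univ.filter fun v => v ∈ Y ∧ ∀ A ∈ C, v ∈ A → A = Y
    (∀ v : V, v ∉ V' → ∃ A ∈ C.erase Y, v ∈ A) ∧
    (∀ A ∈ C.erase Y, A ⊆ Finset.univ \ V') ∧
    IsMinimalCover (C.erase Y) ∧
    (C.erase Y).card = C.card - 1 ∧
    (Finset.univ \ V').card ≤ Fintype.card V - 1 := by
  intro V'
  have hmemV' : ∀ v : V, v ∈ V' ↔ (v ∈ Y ∧ ∀ A ∈ C, v ∈ A → A = Y) := by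
    intro v; simp [V']
  have hloyal : ∃ v, v ∈ V' := by
    have h := hm Y hY
    rw [Finset.not_subset] at h
    obtain ⟨v, hvY, hv⟩ := h
    refine ⟨v, (hmemV' v).2 ⟨hvY, fun A hA hvA => ?_⟩⟩
    by_contra hne
    exact hv ((Finset.le_sup (f := id) (Finset.mem_erase.mpr ⟨hne, hA⟩)) hvA)
  refine ⟨?_, ?_, ?_, ?_, ?_⟩
  · intro v hv
    rw [hmemV'] at hv
    push_neg at hv
    by_cases hvY : v ∈ Y
    · obtain ⟨A, hA, hvA, hAY⟩ := hv hvY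
      exact ⟨A, Finset.mem_erase.mpr ⟨hAY, hA⟩, hvA⟩
    · obtain ⟨A, hA, hvA⟩ := hC v
      have : A ≠ Y := fun h => hvY (h ▸ hvA)
      exact ⟨A, Finset.mem_erase.mpr ⟨this, hA⟩, hvA⟩
  · intro A hA v hvA
    rw [Finset.mem_sdiff]
    refine ⟨Finset.mem_univ v, fun hv => ?_⟩
    obtain ⟨hne, hAC⟩ := Finset.mem_erase.mp hA
    exact hne (((hmemV' v).1 hv).2 A hAC hvA)
  · intro A hA hsub
    obtain ⟨hne, hAC⟩ := Finset.mem_erase.mp hA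
    exact hm A hAC (hsub.trans (Finset.sup_mono (Finset.erase_subset_erase A
      (Finset.erase_subset Y C))))
  · exact Finset.card_erase_of_mem hY
  · obtain ⟨v, hv⟩ := hloyal
    have h1 : 1 ≤ V'.card := Finset.card_pos.mpr ⟨v, hv⟩
    have := Finset.card_sdiff_of_subset (Finset.subset_univ V')
    rw [this, Finset.card_univ]
    omega
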